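/- arXiv:1711.06547 — 2 statements merged into one kernel-verified Lean document; each statement's English description precedes it below -/
import Mathlib

section
/- The Neumann Green's function G of the annulus of radii 1 and τ is symmetric: G(z,z') = G(z',z) for all distinct z, z' in the closed annulus. -/
open MeasureTheory Metric

/-- The open annulus `{z : 1 < |z| < τ}` in `ℂ`. -/
def annulus (τ : ℝ) : Set ℂ := {z : ℂ | 1 < ‖z‖ ∧ ‖z‖ < τ}

/-- The two boundary circles of the annulus. -/
def annulusBoundary (τ : ℝ) : Set ℂ := sphere (0 : ℂ) 1 ∪ sphere (0 : ℂ) τ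

/-- The `n = 0` Fourier mode of the Neumann Green's function of the annulus. -/
noncomputable def gZero (τ r ρ : ℝ) : ℝ :=
  if r ≤ ρ then
    (Real.log r + τ ^ 2 * Real.log (τ / ρ) + τ * Real.log (r / ρ)) / (τ + 1) ^ 2
  else
    (Real.log ρ + τ ^ 2 * Real.log (τ / r) + τ * Real.log (ρ / r)) / (τ + 1) ^ 2

/-- The `n ≥ 1` Fourier coefficients of the regular part of the Neumann Green's
function of the annulus. -/
noncomputable def gFourier (τ : ℝ) (n : ℕ) (r ρ : ℝ) : ℝ :=
  (1 / (2 * (n : ℝ) * τ ^ (2 * n) * (τ ^ (2 * n) - 1))) *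
    (if r ≤ ρ then (τ ^ (2 * n) + ρ ^ (2 * n)) * (r ^ (2 * n) + 1)
      else (τ ^ (2 * n) + r ^ (2 * n)) * (ρ ^ (2 * n) + 1)) / (r ^ n * ρ ^ n)

/-- The Neumann Green's function of the annulus of radii `1` and `τ`:
`G(z,z') = g_0(|z|,|z'|) + 2 ∑_{n≥1} g_n(|z|,|z'|) cos n(arg z − arg z')`
`+ ln( |τ⁴ z² z'²| / (|1 − z z̄'| |τ² − z z̄'| |z − z'| |τ² z − z'|) )`,
where `|τ² z − z'|` is replaced by `|z − τ² z'|` when `|z| > |z'|`. -/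
noncomputable def GreenA (τ : ℝ) (z z' : ℂ) : ℝ :=
  gZero τ (‖z‖) (‖z'‖) +
    2 * ∑' n : ℕ, gFourier τ (n + 1) (‖z‖) (‖z'‖) *
      Real.cos ((n + 1 : ℝ) * (Complex.arg z - Complex.arg z')) +
    Real.log (‖(τ : ℂ) ^ 4 * z ^ 2 * z' ^ 2‖ /
      (‖1 - z * (starRingEnd ℂ) z'‖ *
        ‖(τ : ℂ) ^ 2 - z * (starRingEnd ℂ) z'‖ * ‖z - z'‖ *
        (if ‖z‖ ≤ ‖z'‖ then ‖(τ : ℂ) ^ 2 * z - z'‖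
          else ‖z - (τ : ℂ) ^ 2 * z'‖)))

lemma gZero_symm (τ r ρ : ℝ) : gZero τ r ρ = gZero τ ρ r := by
  unfold gZero
  split_ifs with h1 h2 h3
  · have : r = ρ := le_antisymm h1 h2
    subst this; rfl
  · rfl
  · rfl
  · exact absurd (le_of_not_ge h1) h3

lemma gFourier_symm (τ : ℝ) (n : ℕ) (r ρ : ℝ) : gFourier τ n r ρ = gFourier τ n ρ r := by
  unfold gFourier
  split_ifs with h1 h2 h3
  · have : r = ρ := le_antisymm h1 h2
    subst this; ring
  · ring
  · ring
  · exact absurd (le_of_not_ge h1) h3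

lemma abs_swap_τ (τ : ℝ) (z z' : ℂ) (h : ‖z‖ = ‖z'‖) :
    ‖(τ : ℂ) ^ 2 * z - z'‖ = ‖(τ : ℂ) ^ 2 * z' - z‖ := by
  have hn : Complex.normSq z = Complex.normSq z' := by
    rw [← Complex.sq_norm, ← Complex.sq_norm, h]
  rw [Complex.norm_def, Complex.norm_def]
  congr 1
  simp only [Complex.normSq_sub, Complex.normSq_mul, Complex.mul_re]
  simp [Complex.normSq_mul, Complex.mul_conj', Complex.mul_re, Complex.mul_im, hn,
    Complex.normSq_sub, ← Complex.ofReal_pow, Complex.ofReal_im, Complex.ofReal_re]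
  ring

/-- the Neumann Green's function of the annulus of radii `1` and `τ` is
symmetric: `G(z,z') = G(z',z)` for all distinct `z, z'` in the closed annulus. -/
theorem stmt6 (τ : ℝ) (hτ : 1 < τ) :
    ∀ z z' : ℂ, 1 ≤ ‖z‖ → ‖z‖ ≤ τ →
      1 ≤ ‖z'‖ → ‖z'‖ ≤ τ → z ≠ z' →
      GreenA τ z z' = GreenA τ z' z := by
  intro z z' _ _ _ _ _
  unfold GreenA
  have hsum : ∀ n : ℕ, gFourier τ (n+1) (‖z‖) (‖z'‖) *
      Real.cos ((n+1:ℝ) * (Complex.arg z - Complex.arg z')) =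
      gFourier τ (n+1) (‖z'‖) (‖z‖) *
      Real.cos ((n+1:ℝ) * (Complex.arg z' - Complex.arg z)) := by
    intro n
    rw [gFourier_symm]
    congr 1
    rw [show ((n:ℝ)+1) * (Complex.arg z - Complex.arg z') =
      -(((n:ℝ)+1) * (Complex.arg z' - Complex.arg z)) by ring, Real.cos_neg]
  have h1 : ‖(τ:ℂ)^4 * z^2 * z'^2‖ = ‖(τ:ℂ)^4 * z'^2 * z^2‖ := by
    congr 1; ring
  have h2 : ‖1 - z' * (starRingEnd ℂ) z‖ = ‖1 - z * (starRingEnd ℂ) z'‖ := by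
    rw [← Complex.norm_conj (1 - z * (starRingEnd ℂ) z')]
    congr 1; simp [map_sub, map_mul, mul_comm]
  have h3 : ‖(τ:ℂ)^2 - z' * (starRingEnd ℂ) z‖ = ‖(τ:ℂ)^2 - z * (starRingEnd ℂ) z'‖ := by
    rw [← Complex.norm_conj ((τ:ℂ)^2 - z * (starRingEnd ℂ) z')]
    congr 1
    simp [map_sub, map_mul, mul_comm, ← Complex.ofReal_pow]
  have h4 : ‖z' - z‖ = ‖z - z'‖ := norm_sub_rev _ _
  have h5 : (if ‖z'‖ ≤ ‖z‖ then ‖(τ:ℂ)^2 * z' - z‖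
      else ‖z' - (τ:ℂ)^2 * z‖) =
      (if ‖z‖ ≤ ‖z'‖ then ‖(τ:ℂ)^2 * z - z'‖
      else ‖z - (τ:ℂ)^2 * z'‖) := by
    rcases lt_trichotomy (‖z‖) (‖z'‖) with h | h | h
    · rw [if_neg (not_le.mpr h), if_pos h.le, norm_sub_rev]
    · rw [if_pos h.le, if_pos h.ge, abs_swap_τ τ z' z h.symm]
    · rw [if_pos h.le, if_neg (not_le.mpr h), norm_sub_rev]
  rw [gZero_symm, tsum_congr hsum, h1, h2, h3, h4, h5]
end

section
/- For τ > 1, ∑_{n=1}^∞ (τ^{2n}+1)/(n τ^{2n}(τ^{2n}−1)) is finite; it tends to 0 as τ → ∞, and as τ → 1⁺ it diverges with asymptotic (π²/6)·1/(τ−1), i.e. (τ−1)·∑_{n=1}^∞ (τ^{2n}+1)/(n τ^{2n}(τ^{2n}−1)) → π²/6. -/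
/-- The series `∑_{n≥1} (τ^{2n}+1)/(n τ^{2n}(τ^{2n}−1))`, the on-diagonal value of the
regular part of the annulus Neumann Green's function on the inner boundary circle. -/
noncomputable def GYdiag (τ : ℝ) : ℝ :=
  ∑' n : ℕ, (τ ^ (2 * (n + 1)) + 1) /
    (((n : ℝ) + 1) * τ ^ (2 * (n + 1)) * (τ ^ (2 * (n + 1)) - 1))

open Filter

-- Bernoulli lower bound
private lemma bern (τ : ℝ) (hτ : 1 < τ) (m : ℕ) :
    2*(m:ℝ)*(τ-1) ≤ τ^(2*m) - 1 := by
  have h := one_add_mul_le_pow (by linarith : (-2:ℝ) ≤ τ - 1) (2*m)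
  have e : (1:ℝ) + (τ-1) = τ := by ring
  rw [e] at h
  push_cast at h ⊢
  linarith

private lemma geomub (τ : ℝ) (hτ : 1 < τ) (m : ℕ) :
    τ^(2*m) - 1 ≤ 2*(m:ℝ)*(τ-1)*τ^(2*m) := by
  have hg := geom_sum_mul τ (2*m)
  have hb : (∑ i ∈ Finset.range (2*m), τ ^ i) ≤ (2*m) * τ^(2*m) := by
    calc (∑ i ∈ Finset.range (2*m), τ ^ i)
        ≤ ∑ _i ∈ Finset.range (2*m), τ^(2*m) :=
          Finset.sum_le_sum fun i hi => pow_le_pow_right₀ hτ.le (Finset.mem_range.mp hi).le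
      _ = (2*m) * τ^(2*m) := by
          rw [Finset.sum_const, Finset.card_range, nsmul_eq_mul]; push_cast; ring
  have hτ1 : (0:ℝ) ≤ τ - 1 := by linarith
  calc τ^(2*m) - 1 = (∑ i ∈ Finset.range (2*m), τ ^ i) * (τ - 1) := hg.symm
    _ ≤ ((2*m) * τ^(2*m)) * (τ-1) := mul_le_mul_of_nonneg_right hb hτ1
    _ = 2*(m:ℝ)*(τ-1)*τ^(2*m) := by push_cast; ring

private lemma xgt (τ : ℝ) (hτ : 1 < τ) (n : ℕ) : 1 < τ ^ (2*(n+1)) :=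
  one_lt_pow₀ hτ (by omega)

private lemma term_nonneg (τ : ℝ) (hτ : 1 < τ) (n : ℕ) :
    0 ≤ (τ ^ (2 * (n + 1)) + 1) /
      (((n : ℝ) + 1) * τ ^ (2 * (n + 1)) * (τ ^ (2 * (n + 1)) - 1)) := by
  have hx := xgt τ hτ n
  have hn : (0:ℝ) < (n:ℝ) + 1 := by positivity
  apply div_nonneg
  · nlinarith
  · have : (0:ℝ) < ((n:ℝ)+1) * τ ^ (2*(n+1)) * (τ ^ (2*(n+1)) - 1) :=
      mul_pos (mul_pos hn (by linarith)) (by linarith)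
    linarith

private lemma rlt1 (τ : ℝ) (hτ : 1 < τ) : (τ^2)⁻¹ < 1 := by
  rw [inv_lt_one_iff₀]; right; nlinarith

private lemma geo_summable (τ : ℝ) (hτ : 1 < τ) :
    Summable (fun n : ℕ => (2/(1-(τ^2)⁻¹)) * ((τ^2)⁻¹)^(n+1)) := by
  have hr0 : (0:ℝ) ≤ (τ^2)⁻¹ := by positivity
  have := (summable_geometric_of_lt_one hr0 (rlt1 τ hτ)).mul_left
    ((2/(1-(τ^2)⁻¹)) * (τ^2)⁻¹)
  refine this.congr fun n => ?_
  ring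

private lemma term_le (τ : ℝ) (hτ : 1 < τ) (n : ℕ) :
    (τ ^ (2 * (n + 1)) + 1) /
      (((n : ℝ) + 1) * τ ^ (2 * (n + 1)) * (τ ^ (2 * (n + 1)) - 1))
      ≤ (2/(1-(τ^2)⁻¹)) * ((τ^2)⁻¹)^(n+1) := by
  have hτ0 : (0:ℝ) < τ := by linarith
  have hr0 : (0:ℝ) ≤ (τ^2)⁻¹ := by positivity
  have hr1 : (τ^2)⁻¹ < 1 := rlt1 τ hτ
  set x := τ ^ (2*(n+1)) with hxdef
  have hx : 1 < x := xgt τ hτ n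
  have hxr : ((τ^2)⁻¹)^(n+1) = x⁻¹ := by
    rw [hxdef, pow_mul]; exact inv_pow _ _
  have hτ2x : τ^2 ≤ x := by
    rw [hxdef]
    calc τ^2 = τ^(2*1) := by norm_num
      _ ≤ τ^(2*(n+1)) := pow_le_pow_right₀ hτ.le (by omega)
  clear_value x
  have hd : (1:ℝ) - (τ^2)⁻¹ > 0 := by linarith
  have hn1 : (1:ℝ) ≤ (n:ℝ) + 1 := by
    have := Nat.cast_nonneg (α := ℝ) n; linarith
  have hkey : (1 - (τ^2)⁻¹) * x ≤ x - 1 := by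
    have h1 : (1:ℝ) ≤ (τ^2)⁻¹ * x := by
      rw [inv_mul_eq_div, le_div_iff₀ (by positivity : (0:ℝ) < τ^2)]
      linarith
    nlinarith
  rw [hxr]
  have hDpos : (0:ℝ) < ((n:ℝ)+1) * x * (x-1) :=
    mul_pos (mul_pos (by positivity) (by linarith)) (by linarith)
  rw [div_le_iff₀ hDpos]
  have hxinv : (2/(1-(τ^2)⁻¹)) * x⁻¹ * (((n:ℝ)+1) * x * (x-1))
      = (2*(x⁻¹*x))/(1-(τ^2)⁻¹) * (((n:ℝ)+1) * (x-1)) := by ring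
  rw [hxinv, inv_mul_cancel₀ (by positivity : x ≠ 0)]
  rw [show 2*1/(1-(τ^2)⁻¹) * (((n:ℝ)+1) * (x-1))
      = (2*(((n:ℝ)+1)*(x-1)))/(1-(τ^2)⁻¹) from by ring]
  rw [le_div_iff₀ hd]
  have h1r : 1 - (τ^2)⁻¹ ≤ x - 1 := by
    nlinarith [mul_nonneg hd.le (by linarith : (0:ℝ) ≤ x - 1)]
  have h2 : (x+1)*(1-(τ^2)⁻¹) ≤ 2*(x - 1) := by nlinarith
  have h3 : 2*(x-1) ≤ 2*((n:ℝ)+1)*(x-1) := by nlinarith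
  nlinarith [h2, h3]

private lemma summable_term (τ : ℝ) (hτ : 1 < τ) :
    Summable (fun n : ℕ => (τ ^ (2 * (n + 1)) + 1) /
      (((n : ℝ) + 1) * τ ^ (2 * (n + 1)) * (τ ^ (2 * (n + 1)) - 1))) :=
  Summable.of_nonneg_of_le (fun n => term_nonneg τ hτ n) (fun n => term_le τ hτ n)
    (geo_summable τ hτ)

private lemma gy_nonneg (τ : ℝ) (hτ : 1 < τ) : 0 ≤ GYdiag τ :=
  tsum_nonneg (fun n => term_nonneg τ hτ n)

private lemma gy_upper (τ : ℝ) (hτ : 1 < τ) :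
    GYdiag τ ≤ 2/(1-(τ^2)⁻¹) * ((τ^2)⁻¹ * (1-(τ^2)⁻¹)⁻¹) := by
  have hr0 : (0:ℝ) ≤ (τ^2)⁻¹ := by positivity
  have hr1 : (τ^2)⁻¹ < 1 := rlt1 τ hτ
  have h := Summable.tsum_le_tsum (fun n => term_le τ hτ n) (summable_term τ hτ) (geo_summable τ hτ)
  refine h.trans_eq ?_
  have e : (fun n : ℕ => (2/(1-(τ^2)⁻¹)) * ((τ^2)⁻¹)^(n+1))
      = fun n : ℕ => ((2/(1-(τ^2)⁻¹)) * (τ^2)⁻¹) * ((τ^2)⁻¹)^n := by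
    funext n; ring
  rw [e, tsum_mul_left, tsum_geometric_of_lt_one hr0 hr1]
  ring

private lemma gy_tendsto_zero : Filter.Tendsto GYdiag Filter.atTop (nhds 0) := by
  have hr : Tendsto (fun τ:ℝ => (τ^2)⁻¹) atTop (nhds 0) :=
    (tendsto_pow_atTop two_ne_zero).inv_tendsto_atTop
  have h1 : Tendsto (fun τ:ℝ => 1 - (τ^2)⁻¹) atTop (nhds (1-0)) :=
    tendsto_const_nhds.sub hr
  have hinv : Tendsto (fun τ:ℝ => (1-(τ^2)⁻¹)⁻¹) atTop (nhds ((1-(0:ℝ))⁻¹)) :=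
    h1.inv₀ (by norm_num)
  have hdiv : Tendsto (fun τ:ℝ => 2/(1-(τ^2)⁻¹)) atTop (nhds (2/(1-(0:ℝ)))) :=
    tendsto_const_nhds.div h1 (by norm_num)
  have hB : Tendsto (fun τ:ℝ => 2/(1-(τ^2)⁻¹) * ((τ^2)⁻¹ * (1-(τ^2)⁻¹)⁻¹)) atTop
      (nhds 0) := by
    have := hdiv.mul (hr.mul hinv)
    simpa using this
  refine tendsto_of_tendsto_of_tendsto_of_le_of_le' tendsto_const_nhds hB ?_ ?_
  · filter_upwards [eventually_gt_atTop (1:ℝ)] with τ hτ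
    exact gy_nonneg τ hτ
  · filter_upwards [eventually_gt_atTop (1:ℝ)] with τ hτ
    exact gy_upper τ hτ

private lemma basel_succ : HasSum (fun n : ℕ => 1/((n:ℝ)+1)^2) (Real.pi^2/6) := by
  have h2 := (hasSum_nat_add_iff' (f := fun n : ℕ => (1:ℝ)/(n:ℝ)^2) 1).mpr hasSum_zeta_two
  simp only [Finset.range_one, Finset.sum_singleton, Nat.cast_zero] at h2
  norm_num at h2
  push_cast at h2
  simpa [one_div] using h2

private lemma basel_summable : Summable (fun n : ℕ => 1/((n:ℝ)+1)^2) := basel_succ.summable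

-- Upper comparison term and lower comparison term
private lemma U_nonneg (τ : ℝ) (hτ : 1 < τ) (n : ℕ) :
    0 ≤ (τ^(2*(n+1)) + 1)/(2*((n:ℝ)+1)^2 * τ^(2*(n+1))) := by
  have hx := xgt τ hτ n
  have hm : (0:ℝ) < ((n:ℝ)+1)^2 := by positivity
  set x := τ^(2*(n+1)); clear_value x
  apply div_nonneg (by linarith) (by nlinarith)

private lemma U_le (τ : ℝ) (hτ : 1 < τ) (n : ℕ) :
    (τ^(2*(n+1)) + 1)/(2*((n:ℝ)+1)^2 * τ^(2*(n+1))) ≤ 1/((n:ℝ)+1)^2 := by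
  have hx := xgt τ hτ n
  have hm : (0:ℝ) < ((n:ℝ)+1)^2 := by positivity
  rw [div_le_div_iff₀ (by nlinarith) hm]
  nlinarith

private lemma L_nonneg (τ : ℝ) (hτ : 1 < τ) (n : ℕ) :
    0 ≤ (τ^(2*(n+1)) + 1)/(2*((n:ℝ)+1)^2 * (τ^(2*(n+1)))^2) := by
  have hx := xgt τ hτ n
  have hm : (0:ℝ) < ((n:ℝ)+1)^2 := by positivity
  set x := τ^(2*(n+1)); clear_value x
  have hx2 : (1:ℝ) < x^2 := by nlinarith
  apply div_nonneg (by linarith) (by nlinarith)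

private lemma L_le (τ : ℝ) (hτ : 1 < τ) (n : ℕ) :
    (τ^(2*(n+1)) + 1)/(2*((n:ℝ)+1)^2 * (τ^(2*(n+1)))^2) ≤ 1/((n:ℝ)+1)^2 := by
  have hx := xgt τ hτ n
  have hm : (0:ℝ) < ((n:ℝ)+1)^2 := by positivity
  set x := τ^(2*(n+1)); clear_value x
  have hx2 : (1:ℝ) < x^2 := by nlinarith
  rw [div_le_div_iff₀ (by nlinarith) hm]
  have h1 : x + 1 ≤ 2*x^2 := by nlinarith
  nlinarith [mul_le_mul_of_nonneg_left h1 hm.le]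

private lemma U_summable (τ : ℝ) (hτ : 1 < τ) :
    Summable (fun n : ℕ => (τ^(2*(n+1)) + 1)/(2*((n:ℝ)+1)^2 * τ^(2*(n+1)))) :=
  Summable.of_nonneg_of_le (U_nonneg τ hτ) (U_le τ hτ) basel_summable

private lemma L_summable (τ : ℝ) (hτ : 1 < τ) :
    Summable (fun n : ℕ => (τ^(2*(n+1)) + 1)/(2*((n:ℝ)+1)^2 * (τ^(2*(n+1)))^2)) :=
  Summable.of_nonneg_of_le (L_nonneg τ hτ) (L_le τ hτ) basel_summable

private lemma tendsto_U :
    Tendsto (fun τ : ℝ => ∑' n : ℕ, (τ^(2*(n+1)) + 1)/(2*((n:ℝ)+1)^2 * τ^(2*(n+1))))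
      (nhdsWithin 1 (Set.Ioi 1)) (nhds (Real.pi^2/6)) := by
  rw [← basel_succ.tsum_eq]
  apply tendsto_tsum_of_dominated_convergence basel_summable
  · intro k
    have c : ContinuousAt
        (fun τ:ℝ => (τ^(2*(k+1)) + 1)/(2*((k:ℝ)+1)^2 * τ^(2*(k+1)))) 1 := by
      apply ContinuousAt.div (by fun_prop) (by fun_prop)
      norm_num
      positivity
    have h := c.tendsto.mono_left (nhdsWithin_le_nhds : nhdsWithin (1:ℝ) (Set.Ioi 1) ≤ nhds 1)
    have e : ((1:ℝ)^(2*(k+1)) + 1)/(2*((k:ℝ)+1)^2 * (1:ℝ)^(2*(k+1)))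
        = 1/((k:ℝ)+1)^2 := by
      rw [one_pow]
      rw [div_eq_div_iff (by positivity) (by positivity)]
      ring
    rwa [e] at h
  · filter_upwards [self_mem_nhdsWithin] with τ hτ
    intro k
    rw [Real.norm_eq_abs, abs_of_nonneg (U_nonneg τ hτ k)]
    exact U_le τ hτ k

private lemma tendsto_L :
    Tendsto (fun τ : ℝ => ∑' n : ℕ, (τ^(2*(n+1)) + 1)/(2*((n:ℝ)+1)^2 * (τ^(2*(n+1)))^2))
      (nhdsWithin 1 (Set.Ioi 1)) (nhds (Real.pi^2/6)) := by
  rw [← basel_succ.tsum_eq]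
  apply tendsto_tsum_of_dominated_convergence basel_summable
  · intro k
    have c : ContinuousAt
        (fun τ:ℝ => (τ^(2*(k+1)) + 1)/(2*((k:ℝ)+1)^2 * (τ^(2*(k+1)))^2)) 1 := by
      apply ContinuousAt.div (by fun_prop) (by fun_prop)
      norm_num
      positivity
    have h := c.tendsto.mono_left (nhdsWithin_le_nhds : nhdsWithin (1:ℝ) (Set.Ioi 1) ≤ nhds 1)
    have e : ((1:ℝ)^(2*(k+1)) + 1)/(2*((k:ℝ)+1)^2 * ((1:ℝ)^(2*(k+1)))^2)
        = 1/((k:ℝ)+1)^2 := by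
      rw [one_pow]
      rw [div_eq_div_iff (by positivity) (by positivity)]
      ring
    rwa [e] at h
  · filter_upwards [self_mem_nhdsWithin] with τ hτ
    intro k
    rw [Real.norm_eq_abs, abs_of_nonneg (L_nonneg τ hτ k)]
    exact L_le τ hτ k

private lemma sand_u (τ : ℝ) (hτ : 1 < τ) (n : ℕ) :
    (τ - 1) * ((τ ^ (2 * (n + 1)) + 1) /
      (((n : ℝ) + 1) * τ ^ (2 * (n + 1)) * (τ ^ (2 * (n + 1)) - 1)))
    ≤ (τ^(2*(n+1)) + 1)/(2*((n:ℝ)+1)^2 * τ^(2*(n+1))) := by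
  have hx := xgt τ hτ n
  have hb := bern τ hτ (n+1)
  push_cast at hb
  set x := τ ^ (2*(n+1)) with hxdef
  clear_value x
  have hm : (0:ℝ) < (n:ℝ)+1 := by positivity
  have hDpos : (0:ℝ) < ((n:ℝ)+1) * x * (x-1) :=
    mul_pos (mul_pos hm (by linarith)) (by linarith)
  rw [mul_div_assoc']
  rw [div_le_div_iff₀ hDpos (by nlinarith)]
  calc (τ-1) * (x+1) * (2*((n:ℝ)+1)^2 * x)
      = (((n:ℝ)+1)*x*(x+1)) * (2*((n:ℝ)+1)*(τ-1)) := by ring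
    _ ≤ (((n:ℝ)+1)*x*(x+1)) * (x-1) := by
        apply mul_le_mul_of_nonneg_left hb
        nlinarith
    _ = (x+1) * (((n:ℝ)+1)*x*(x-1)) := by ring

private lemma sand_l (τ : ℝ) (hτ : 1 < τ) (n : ℕ) :
    (τ^(2*(n+1)) + 1)/(2*((n:ℝ)+1)^2 * (τ^(2*(n+1)))^2)
    ≤ (τ - 1) * ((τ ^ (2 * (n + 1)) + 1) /
      (((n : ℝ) + 1) * τ ^ (2 * (n + 1)) * (τ ^ (2 * (n + 1)) - 1))) := by
  have hx := xgt τ hτ n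
  have hb := geomub τ hτ (n+1)
  push_cast at hb
  set x := τ ^ (2*(n+1)) with hxdef
  clear_value x
  have hm : (0:ℝ) < (n:ℝ)+1 := by positivity
  have hDpos : (0:ℝ) < ((n:ℝ)+1) * x * (x-1) :=
    mul_pos (mul_pos hm (by linarith)) (by linarith)
  rw [mul_div_assoc']
  rw [div_le_div_iff₀ (by nlinarith) hDpos]
  calc (x+1) * (((n:ℝ)+1)*x*(x-1))
      = (((n:ℝ)+1)*x*(x+1)) * (x-1) := by ring
    _ ≤ (((n:ℝ)+1)*x*(x+1)) * (2*((n:ℝ)+1)*(τ-1)*x) := by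
        apply mul_le_mul_of_nonneg_left hb
        nlinarith
    _ = (τ-1) * (x+1) * (2*((n:ℝ)+1)^2 * x^2) := by ring

private lemma gy_tendsto_one :
    Tendsto (fun τ : ℝ => (τ - 1) * GYdiag τ)
      (nhdsWithin 1 (Set.Ioi 1)) (nhds (Real.pi ^ 2 / 6)) := by
  refine tendsto_of_tendsto_of_tendsto_of_le_of_le' tendsto_L tendsto_U ?_ ?_
  · filter_upwards [self_mem_nhdsWithin] with τ hτ
    have hτ1 : 1 < τ := hτ
    rw [GYdiag, ← tsum_mul_left]
    exact Summable.tsum_le_tsum (fun n => sand_l τ hτ1 n) (L_summable τ hτ1)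
      ((summable_term τ hτ1).mul_left (τ-1))
  · filter_upwards [self_mem_nhdsWithin] with τ hτ
    have hτ1 : 1 < τ := hτ
    rw [GYdiag, ← tsum_mul_left]
    exact Summable.tsum_le_tsum (fun n => sand_u τ hτ1 n) ((summable_term τ hτ1).mul_left (τ-1))
      (U_summable τ hτ1)

/-- for every `τ > 1` the series `∑_{n≥1} (τ^{2n}+1)/(n τ^{2n}(τ^{2n}−1))`
converges; its sum tends to `0` as `τ → ∞`, and as `τ → 1⁺` it diverges like
`(π²/6)/(τ−1)`, i.e. `(τ−1) · ∑ → π²/6`. -/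
theorem stmt17 :
    (∀ τ : ℝ, 1 < τ →
      Summable (fun n : ℕ => (τ ^ (2 * (n + 1)) + 1) /
        (((n : ℝ) + 1) * τ ^ (2 * (n + 1)) * (τ ^ (2 * (n + 1)) - 1)))) ∧
    Filter.Tendsto GYdiag Filter.atTop (nhds 0) ∧
    Filter.Tendsto (fun τ : ℝ => (τ - 1) * GYdiag τ)
      (nhdsWithin 1 (Set.Ioi 1)) (nhds (Real.pi ^ 2 / 6)) :=
  ⟨fun τ hτ => summable_term τ hτ, gy_tendsto_zero, gy_tendsto_one⟩
end
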